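/- Let F and G be symmetric distributions with central medians m_F and m_G (i.e., there exist m_F, m_G such that F^{-1}(γ) = 2m_F − F^{-1}(1−γ) and G^{-1}(γ) = 2m_G − G^{-1}(1−γ) for almost all γ ∈ (0,1)). If m_F ≤ m_G, then Shift_+^{AVM}(F,G) = 0. -/
import Mathlib


open MeasureTheory
open scoped ENNReal

/-- `Shift₊^AVM` component, as a lower Lebesgue integral. -/
noncomputable def avmShiftPlusL (qF qG : ℝ → ℝ) : ℝ≥0∞ :=
  ∫⁻ α in Set.Ioo (0:ℝ) 1,
    ENNReal.ofReal (max (min (qF ((1 + α) / 2) - qG ((1 + α) / 2))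
                             (qF ((1 - α) / 2) - qG ((1 - α) / 2))) 0)

lemma ae_pullback_half {P : ℝ → Prop}
    (h : ∀ᵐ γ ∂(volume.restrict (Set.Ioo (0:ℝ) 1)), P γ) :
    ∀ᵐ α ∂(volume.restrict (Set.Ioo (0:ℝ) 1)), P ((1 + α) / 2) := by
  rw [ae_iff, Measure.restrict_apply' measurableSet_Ioo] at h ⊢
  have hsub : {α | ¬P ((1 + α) / 2)} ∩ Set.Ioo 0 1 ⊆
      (fun α : ℝ => (1 + α) / 2) ⁻¹' ({γ | ¬P γ} ∩ Set.Ioo 0 1) := by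
    rintro α ⟨hα, h0, h1⟩
    exact ⟨hα, by constructor <;> simp only [Set.mem_Ioo] at * <;> linarith⟩
  refine measure_mono_null hsub ?_
  have heq : (fun α : ℝ => (1 + α) / 2) ⁻¹' ({γ | ¬P γ} ∩ Set.Ioo 0 1) =
      ((2:ℝ)⁻¹ * ·) ⁻¹' (((2:ℝ)⁻¹ + ·) ⁻¹' ({γ | ¬P γ} ∩ Set.Ioo 0 1)) := by
    ext α
    simp only [Set.mem_preimage]
    ring_nf
  rw [heq, Real.volume_preimage_mul_left (by norm_num : (2:ℝ)⁻¹ ≠ 0),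
    measure_preimage_add volume _ _, h, mul_zero]

/-- For symmetric distributions with central medians `m_F ≤ m_G`,
the plus shift component of the AVM vanishes. -/
theorem shift_symmetric_zero (qF qG : ℝ → ℝ) (mF mG : ℝ)
    (hF : MonotoneOn qF (Set.Ioo 0 1)) (hG : MonotoneOn qG (Set.Ioo 0 1))
    (hFsym : ∀ᵐ γ ∂(volume.restrict (Set.Ioo (0:ℝ) 1)),
      qF γ = 2 * mF - qF (1 - γ))
    (hGsym : ∀ᵐ γ ∂(volume.restrict (Set.Ioo (0:ℝ) 1)),
      qG γ = 2 * mG - qG (1 - γ))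
    (hm : mF ≤ mG) :
    avmShiftPlusL qF qG = 0 := by
  have hF' := ae_pullback_half hFsym
  have hG' := ae_pullback_half hGsym
  have hzero : (fun α => ENNReal.ofReal
      (max (min (qF ((1 + α) / 2) - qG ((1 + α) / 2))
                (qF ((1 - α) / 2) - qG ((1 - α) / 2))) 0))
      =ᵐ[volume.restrict (Set.Ioo (0:ℝ) 1)] (fun _ => (0:ℝ≥0∞)) := by
    filter_upwards [hF', hG'] with α hf hg
    have h1 : 1 - (1 + α) / 2 = (1 - α) / 2 := by ring
    rw [h1] at hf hg
    have hsum : (qF ((1 + α) / 2) - qG ((1 + α) / 2)) +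
        (qF ((1 - α) / 2) - qG ((1 - α) / 2)) = 2 * (mF - mG) := by
      rw [hf, hg]; ring
    have hmin : min (qF ((1 + α) / 2) - qG ((1 + α) / 2))
        (qF ((1 - α) / 2) - qG ((1 - α) / 2)) ≤ 0 := by
      rcases le_total (qF ((1 + α) / 2) - qG ((1 + α) / 2)) 0 with h | h
      · exact le_trans (min_le_left _ _) h
      · exact le_trans (min_le_right _ _) (by linarith)
    rw [max_eq_right hmin, ENNReal.ofReal_zero]
  rw [avmShiftPlusL, lintegral_congr_ae hzero, lintegral_zero]
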